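/- Let n ≥ 3 and let b : ℝ² → ℝ be a smooth graphical translator with vertical velocity e₃ in ℝ³, i.e. ∑_{i=1}^{2} ∂_i( ∂_i b / √(1+|Db|²) ) = 1/√(1+|Db|²) on ℝ². Define w : ℝⁿ → ℝ by w(x₁, …, xₙ) = xₙ + 2·b(x₁/√2, x₂/√2). Then w is an entire graphical translator in ℝ^{n+1} with the horizontal unit velocity T = −eₙ = (−eₙ, 0). (Applied to the bowl soliton b, this shows that Theorem 1.3 fails for n ≥ 3 without the growth assumption on u.) -/

import Mathlib

open scoped ENNReal
open MeasureTheory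

noncomputable section

/-- `u : Ω → ℝ` is a graphical translator with velocity `T = (T', Tlast) ∈ ℝⁿ × ℝ`:
`∑ i ∂_i(∂_i u / √(1+|Du|²)) = (Tlast − ⟨Du, T'⟩)/√(1+|Du|²)` on `Ω`. -/
def IsTranslator {n : ℕ} (Ω : Set (EuclideanSpace ℝ (Fin n)))
    (u : EuclideanSpace ℝ (Fin n) → ℝ)
    (T' : EuclideanSpace ℝ (Fin n)) (Tlast : ℝ) : Prop :=
  ∀ x ∈ Ω,
    (∑ i : Fin n, fderiv ℝ
      (fun y => gradient u y i / Real.sqrt (1 + ‖gradient u y‖ ^ 2)) x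
      (EuclideanSpace.single i 1))
    = (Tlast - (inner ℝ (gradient u x) T' : ℝ)) / Real.sqrt (1 + ‖gradient u x‖ ^ 2)

/-- squared norm in Euclidean space is the sum of squares of coordinates -/
theorem normsq_eq_sum_sq {m : ℕ} (v : EuclideanSpace ℝ (Fin m)) : ‖v‖ ^ 2 = ∑ i, v i ^ 2 := by
  rw [EuclideanSpace.norm_eq, Real.sq_sqrt (by positivity)]
  simp [sq_abs]

/-- real inner product with a Euclidean basis vector -/
theorem inner_single_one {m : ℕ} (v : EuclideanSpace ℝ (Fin m)) (i : Fin m) :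
    (inner ℝ v (EuclideanSpace.single i (1 : ℝ)) : ℝ) = v i := by
  rw [EuclideanSpace.inner_single_right]; simp

/-- the gradient coordinates of a differentiable function are the partial derivatives -/
theorem fderiv_single_eq_gradient {m : ℕ} (b : EuclideanSpace ℝ (Fin m) → ℝ)
    (hb : Differentiable ℝ b) (z : EuclideanSpace ℝ (Fin m)) (i : Fin m) :
    fderiv ℝ b z (EuclideanSpace.single i 1) = gradient b z i := by
  rw [(hb z).hasGradientAt.hasFDerivAt.fderiv, InnerProductSpace.toDual_apply_apply,
    EuclideanSpace.inner_single_right]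
  simp

set_option maxHeartbeats 1000000 in
/-- For `n ≥ 3`, rescaling the rotated product of a vertical graphical translator `b`
in ℝ³ gives an entire graphical translator `w(x) = xₙ + 2 b(x₁/√2, x₂/√2)` in ℝ^{n+1}
with the horizontal unit velocity `T = (−eₙ, 0)`. -/
theorem rescaled_rotated_product_is_horizontal_translator
    (n : ℕ) (hn : 3 ≤ n)
    (b : EuclideanSpace ℝ (Fin 2) → ℝ) (hb : ContDiff ℝ (⊤ : ℕ∞) b)
    (htrb : IsTranslator Set.univ b 0 1)
    (w : EuclideanSpace ℝ (Fin n) → ℝ)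
    (hw : ∀ x, w x = x ⟨n - 1, by omega⟩ +
      2 * b (WithLp.toLp 2 ![x ⟨0, by omega⟩ / Real.sqrt 2, x ⟨1, by omega⟩ / Real.sqrt 2])) :
    IsTranslator Set.univ w
      (-EuclideanSpace.single (⟨n - 1, by omega⟩ : Fin n) 1) 0 := by
  have h20 : (0:ℝ) < Real.sqrt 2 := Real.sqrt_pos.mpr (by norm_num)
  have h2sq : Real.sqrt 2 * Real.sqrt 2 = 2 := Real.mul_self_sqrt (by norm_num)
  have h2inv : (2:ℝ) * (Real.sqrt 2)⁻¹ = Real.sqrt 2 := by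
    rw [eq_comm, eq_mul_inv_iff_mul_eq₀ h20.ne']; exact h2sq
  set i0 : Fin n := ⟨0, by omega⟩ with hi0def
  set i1 : Fin n := ⟨1, by omega⟩ with hi1def
  set iN : Fin n := ⟨n - 1, by omega⟩ with hiNdef
  have h01 : i0 ≠ i1 := by simp [hi0def, hi1def, Fin.ext_iff]
  have h0N : i0 ≠ iN := Fin.ne_of_val_ne (by show 0 ≠ n - 1; omega)
  have h1N : i1 ≠ iN := Fin.ne_of_val_ne (by show 1 ≠ n - 1; omega)
  have hDb : Differentiable ℝ b := hb.differentiable (by simp)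
  set idx : Fin 2 → Fin n := ![i0, i1] with hidxdef
  set A : EuclideanSpace ℝ (Fin n) →L[ℝ] EuclideanSpace ℝ (Fin 2) :=
    (PiLp.continuousLinearEquiv 2 ℝ (fun _ : Fin 2 => ℝ)).symm.toContinuousLinearMap ∘L
      ContinuousLinearMap.pi (fun j => (Real.sqrt 2)⁻¹ • EuclideanSpace.proj (idx j)) with hAdef
  have hidx0 : idx 0 = i0 := rfl
  have hidx1 : idx 1 = i1 := rfl
  have hA : ∀ (v : EuclideanSpace ℝ (Fin n)) (j : Fin 2), A v j = (Real.sqrt 2)⁻¹ * v (idx j) := by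
    intro v j; simp [hAdef, ContinuousLinearMap.pi_apply]
  have hA0 : A (EuclideanSpace.single i0 1) = (Real.sqrt 2)⁻¹ • EuclideanSpace.single 0 1 := by
    ext j
    rw [hA]
    fin_cases j <;>
      simp [hidxdef, EuclideanSpace.single_apply, h01, h01.symm, PiLp.smul_apply]
  have hA1 : A (EuclideanSpace.single i1 1) = (Real.sqrt 2)⁻¹ • EuclideanSpace.single 1 1 := by
    ext j
    rw [hA]
    fin_cases j <;>
      simp [hidxdef, EuclideanSpace.single_apply, h01, h01.symm, PiLp.smul_apply]
  have hAz : ∀ j : Fin n, j ≠ i0 → j ≠ i1 → A (EuclideanSpace.single j 1) = 0 := by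
    intro j hj0 hj1
    ext k
    rw [hA]
    fin_cases k <;> simp [hidxdef, EuclideanSpace.single_apply, Ne.symm hj0, Ne.symm hj1]
  -- rewrite w through A
  have hwfun : w = fun y => (EuclideanSpace.proj iN : EuclideanSpace ℝ (Fin n) →L[ℝ] ℝ) y
      + 2 * b (A y) := by
    funext y
    have hAy : A y = WithLp.toLp 2 ![y i0 / Real.sqrt 2, y i1 / Real.sqrt 2] := by
      ext j
      rw [hA]
      fin_cases j <;> simp [hidx0, hidx1, div_eq_inv_mul, mul_comm] <;> try rfl
    rw [hw y, hAy]
    simp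
  -- the Fréchet derivative of w
  have hL : ∀ x : EuclideanSpace ℝ (Fin n), HasFDerivAt w
      ((EuclideanSpace.proj iN : EuclideanSpace ℝ (Fin n) →L[ℝ] ℝ) +
        (2:ℝ) • ((fderiv ℝ b (A x)).comp A)) x := by
    intro x
    rw [hwfun]
    have h1 : HasFDerivAt (⇑(EuclideanSpace.proj iN : EuclideanSpace ℝ (Fin n) →L[ℝ] ℝ))
        (EuclideanSpace.proj iN : EuclideanSpace ℝ (Fin n) →L[ℝ] ℝ) x :=
      ContinuousLinearMap.hasFDerivAt _
    have h2 : HasFDerivAt (fun y => b (A y)) ((fderiv ℝ b (A x)).comp A) x :=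
      (hDb (A x)).hasFDerivAt.comp x A.hasFDerivAt
    exact h1.add (h2.const_mul 2)
  -- gradient coordinates of w
  have hgwj : ∀ (x : EuclideanSpace ℝ (Fin n)) (j : Fin n), gradient w x j =
      EuclideanSpace.single j (1:ℝ) iN + 2 * fderiv ℝ b (A x) (A (EuclideanSpace.single j 1)) := by
    intro x j
    rw [← inner_single_one (gradient w x) j,
      (hasFDerivAt_iff_hasGradientAt.mp (hL x)).gradient, InnerProductSpace.toDual_symm_apply]
    simp [ContinuousLinearMap.add_apply, ContinuousLinearMap.smul_apply, smul_eq_mul]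
  have hg0 : ∀ x, gradient w x i0 = Real.sqrt 2 * gradient b (A x) 0 := by
    intro x
    rw [hgwj, hA0, ContinuousLinearMap.map_smul, fderiv_single_eq_gradient b hDb]
    simp [EuclideanSpace.single_apply, Ne.symm h0N, smul_eq_mul, ← mul_assoc, h2inv]
  have hg1 : ∀ x, gradient w x i1 = Real.sqrt 2 * gradient b (A x) 1 := by
    intro x
    rw [hgwj, hA1, ContinuousLinearMap.map_smul, fderiv_single_eq_gradient b hDb]
    simp [EuclideanSpace.single_apply, Ne.symm h1N, smul_eq_mul, ← mul_assoc, h2inv]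
  have hgN : ∀ x, gradient w x iN = 1 := by
    intro x
    rw [hgwj, hAz iN (Ne.symm h0N) (Ne.symm h1N)]
    simp [EuclideanSpace.single_apply]
  have hgz : ∀ x (j : Fin n), j ≠ i0 → j ≠ i1 → j ≠ iN → gradient w x j = 0 := by
    intro x j hj0 hj1 hjN
    rw [hgwj, hAz j hj0 hj1]
    simp [EuclideanSpace.single_apply, Ne.symm hjN]
  -- the norm identity
  have hnw : ∀ x, 1 + ‖gradient w x‖ ^ 2 = 2 * (1 + ‖gradient b (A x)‖ ^ 2) := by
    intro x
    rw [normsq_eq_sum_sq, normsq_eq_sum_sq]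
    have hsub : ∑ j : Fin n, gradient w x j ^ 2
        = ∑ j ∈ ({i0, i1, iN} : Finset (Fin n)), gradient w x j ^ 2 := by
      refine (Finset.sum_subset (Finset.subset_univ _) fun j _ hj => ?_).symm
      simp only [Finset.mem_insert, Finset.mem_singleton, not_or] at hj
      rw [hgz x j hj.1 hj.2.1 hj.2.2]
      ring
    rw [hsub, Finset.sum_insert (by simp [h01, h0N]), Finset.sum_insert (by simp [h1N]),
      Finset.sum_singleton, hg0, hg1, hgN, Fin.sum_univ_two, mul_pow, mul_pow,
      Real.sq_sqrt (by norm_num : (0:ℝ) ≤ 2)]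
    ring
  have hs : ∀ x, Real.sqrt (1 + ‖gradient w x‖ ^ 2)
      = Real.sqrt 2 * Real.sqrt (1 + ‖gradient b (A x)‖ ^ 2) := by
    intro x
    rw [hnw, Real.sqrt_mul (by norm_num)]
  have hspos : ∀ z : EuclideanSpace ℝ (Fin 2), 0 < Real.sqrt (1 + ‖gradient b z‖ ^ 2) := by
    intro z; exact Real.sqrt_pos.mpr (by positivity)
  -- differentiability of the quotient functions for b
  have hGi : ∀ i : Fin 2, ContDiff ℝ (⊤ : ℕ∞) (fun z => gradient b z i) := by
    intro i
    have h1 : ContDiff ℝ (⊤ : ℕ∞) (fun z : EuclideanSpace ℝ (Fin 2) => fderiv ℝ b z) :=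
      hb.fderiv_right (by simp)
    have h2 := (ContinuousLinearMap.apply ℝ ℝ
      (EuclideanSpace.single i 1 : EuclideanSpace ℝ (Fin 2))).contDiff.comp h1
    have : (fun z => gradient b z i)
        = fun z => fderiv ℝ b z (EuclideanSpace.single i 1) := by
      funext z; rw [fderiv_single_eq_gradient b hDb]
    rw [this]
    exact h2
  have hnormb : ContDiff ℝ (⊤ : ℕ∞) (fun z => 1 + ‖gradient b z‖ ^ 2) := by
    have : (fun z : EuclideanSpace ℝ (Fin 2) => 1 + ‖gradient b z‖ ^ 2)
        = fun z => 1 + (gradient b z 0 ^ 2 + gradient b z 1 ^ 2) := by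
      funext z; rw [normsq_eq_sum_sq, Fin.sum_univ_two]
    rw [this]
    exact contDiff_const.add (((hGi 0).pow 2).add ((hGi 1).pow 2))
  have hsqrtb : ContDiff ℝ (⊤ : ℕ∞) (fun z => Real.sqrt (1 + ‖gradient b z‖ ^ 2)) :=
    hnormb.sqrt (fun z => by positivity)
  have hφ : ∀ (i : Fin 2) (z : EuclideanSpace ℝ (Fin 2)), DifferentiableAt ℝ
      (fun y => gradient b y i / Real.sqrt (1 + ‖gradient b y‖ ^ 2)) z := by
    intro i z
    exact (((hGi i).div hsqrtb fun z => (hspos z).ne').differentiable (by simp)).differentiableAt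
  -- the main computation
  intro x _
  -- right-hand side
  have hrhs : ((0:ℝ) - (inner ℝ (gradient w x)
      (-EuclideanSpace.single (⟨n - 1, by omega⟩ : Fin n) 1) : ℝ))
      / Real.sqrt (1 + ‖gradient w x‖ ^ 2)
      = 1 / (Real.sqrt 2 * Real.sqrt (1 + ‖gradient b (A x)‖ ^ 2)) := by
    rw [inner_neg_right, inner_single_one, hgN, hs]
    norm_num
  rw [hrhs]
  -- terms vanish off i0, i1
  have hterm0 : ∀ j : Fin n, j ≠ i0 → j ≠ i1 →
      fderiv ℝ (fun y => gradient w y j / Real.sqrt (1 + ‖gradient w y‖ ^ 2)) x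
        (EuclideanSpace.single j 1) = 0 := by
    intro j hj0 hj1
    by_cases hjN : j = iN
    · subst hjN
      have hFeq : (fun y => gradient w y iN / Real.sqrt (1 + ‖gradient w y‖ ^ 2))
          = (fun z : EuclideanSpace ℝ (Fin 2) =>
              1 / (Real.sqrt 2 * Real.sqrt (1 + ‖gradient b z‖ ^ 2))) ∘ A := by
        funext y
        simp only [Function.comp_apply, hgN, hs]
      rw [hFeq]
      have hψ : DifferentiableAt ℝ (fun z : EuclideanSpace ℝ (Fin 2) =>
          1 / (Real.sqrt 2 * Real.sqrt (1 + ‖gradient b z‖ ^ 2))) (A x) := by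
        have : ContDiff ℝ (⊤ : ℕ∞) (fun z : EuclideanSpace ℝ (Fin 2) =>
            1 / (Real.sqrt 2 * Real.sqrt (1 + ‖gradient b z‖ ^ 2))) :=
          contDiff_const.div (contDiff_const.mul hsqrtb)
            (fun z => (mul_pos h20 (hspos z)).ne')
        exact (this.differentiable (by simp)).differentiableAt
      rw [fderiv_comp x hψ A.differentiableAt, ContinuousLinearMap.comp_apply,
        A.fderiv, hAz iN (Ne.symm h0N) (Ne.symm h1N), map_zero]
    · have hFeq : (fun y => gradient w y j / Real.sqrt (1 + ‖gradient w y‖ ^ 2))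
          = fun _ => (0:ℝ) := by
        funext y
        rw [hgz y j hj0 hj1 hjN, zero_div]
      rw [hFeq, fderiv_fun_const]
      simp
  -- terms at i0, i1
  have hterm : ∀ i : Fin 2,
      fderiv ℝ (fun y => gradient w y (idx i) / Real.sqrt (1 + ‖gradient w y‖ ^ 2)) x
        (EuclideanSpace.single (idx i) 1)
      = (Real.sqrt 2)⁻¹ *
        fderiv ℝ (fun z => gradient b z i / Real.sqrt (1 + ‖gradient b z‖ ^ 2)) (A x)
          (EuclideanSpace.single i 1) := by
    intro i
    have hgi : ∀ y, gradient w y (idx i) = Real.sqrt 2 * gradient b (A y) i := by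
      intro y; fin_cases i
      · exact hg0 y
      · exact hg1 y
    have hAi : A (EuclideanSpace.single (idx i) 1)
        = (Real.sqrt 2)⁻¹ • EuclideanSpace.single i 1 := by
      fin_cases i
      · exact hA0
      · exact hA1
    have hFeq : (fun y => gradient w y (idx i) / Real.sqrt (1 + ‖gradient w y‖ ^ 2))
        = (fun z => gradient b z i / Real.sqrt (1 + ‖gradient b z‖ ^ 2)) ∘ A := by
      funext y
      simp only [Function.comp_apply, hgi, hs]
      rw [mul_div_mul_left _ _ h20.ne']
    rw [hFeq, fderiv_comp x (hφ i (A x)) A.differentiableAt, ContinuousLinearMap.comp_apply,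
      A.fderiv, hAi, ContinuousLinearMap.map_smul, smul_eq_mul]
  -- reduce the sum to i0, i1
  have hsum : ∑ i : Fin n, fderiv ℝ
      (fun y => gradient w y i / Real.sqrt (1 + ‖gradient w y‖ ^ 2)) x
      (EuclideanSpace.single i 1)
      = ∑ j ∈ ({i0, i1} : Finset (Fin n)), fderiv ℝ
      (fun y => gradient w y j / Real.sqrt (1 + ‖gradient w y‖ ^ 2)) x
      (EuclideanSpace.single j 1) := by
    refine (Finset.sum_subset (Finset.subset_univ _) fun j _ hj => ?_).symm
    simp only [Finset.mem_insert, Finset.mem_singleton, not_or] at hj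
    exact hterm0 j hj.1 hj.2
  rw [hsum, Finset.sum_insert (by simp [h01]), Finset.sum_singleton]
  have h0 := hterm 0
  have h1 := hterm 1
  rw [hidx0] at h0
  rw [hidx1] at h1
  rw [h0, h1, ← mul_add]
  have htr := htrb (A x) (Set.mem_univ _)
  rw [Fin.sum_univ_two] at htr
  rw [htr]
  rw [inner_zero_right]
  rw [sub_zero]
  field_simp
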